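/- arXiv:math/0310488 — 4 statements merged into one kernel-verified Lean document; each statement's English description precedes it below -/
import Mathlib

section
/- The function q ↦ β_c(q) = 2(q-1)/(q-2) · log(q-1) is concave on the interval (2, ∞); equivalently, its second derivative β_c''(q) = (-2q(q-2) + 4(q-1)log(q-1)) / ((q-2)³(q-1)) is nonpositive for all q > 2. -/
/-!
Writing `x = q - 1 > 1`, the numerator of `β_c''` is `4 x log x - 2 (x ^ 2 - 1)`, which is
nonpositive because `log x ≤ sinh (log x) = (x - x⁻¹) / 2` for `x ≥ 1`; the denominator is
positive. Concavity then follows from the second-derivative test.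
-/

/-- Mean-field Potts critical inverse temperature for `q > 2`. -/
noncomputable def betac (q : ℝ) : ℝ := 2 * (q - 1) / (q - 2) * Real.log (q - 1)

open Real Set

lemma Real.log_le_sub_inv_div_two {x : ℝ} (hx : 1 ≤ x) : log x ≤ (x - x⁻¹) / 2 := by
  rw [← sinh_log (by positivity)]
  exact self_le_sinh_iff.mpr (log_nonneg hx)

lemma betac_deriv2_numerator_nonpos {q : ℝ} (hq : 2 < q) :
    -2 * q * (q - 2) + 4 * (q - 1) * log (q - 1) ≤ 0 := by
  have hx : 0 < q - 1 := by linarith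
  have hlog := log_le_sub_inv_div_two (x := q - 1) (by linarith)
  have hinv : (q - 1) * (q - 1)⁻¹ = 1 := mul_inv_cancel₀ hx.ne'
  nlinarith [mul_le_mul_of_nonneg_left hlog hx.le]

lemma betac_deriv2_nonpos {q : ℝ} (hq : 2 < q) :
    (-2 * q * (q - 2) + 4 * (q - 1) * log (q - 1)) / ((q - 2) ^ 3 * (q - 1)) ≤ 0 := by
  have h2 : 0 < q - 2 := by linarith
  have h1 : 0 < q - 1 := by linarith
  exact div_nonpos_of_nonpos_of_nonneg (betac_deriv2_numerator_nonpos hq) (by positivity)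

lemma hasDerivAt_betac {q : ℝ} (hq : 2 < q) :
    HasDerivAt betac ((2 * (q - 2) - 2 * log (q - 1)) / (q - 2) ^ 2) q := by
  have h1 : q - 1 ≠ 0 := by linarith
  have h2 : q - 2 ≠ 0 := by linarith
  have hsub (c : ℝ) : HasDerivAt (fun q : ℝ => q - c) 1 q := (hasDerivAt_id q).sub_const c
  have hbetac : betac = fun q => 2 * (q - 1) * log (q - 1) / (q - 2) := by
    funext q
    rw [betac]
    ring
  rw [hbetac]
  refine ((((hsub 1).const_mul 2).fun_mul ((hsub 1).log h1)).fun_div (hsub 2) h2).congr_deriv ?_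
  field_simp
  ring

lemma hasDerivAt_betac_deriv {q : ℝ} (hq : 2 < q) :
    HasDerivAt (fun q : ℝ => (2 * (q - 2) - 2 * log (q - 1)) / (q - 2) ^ 2)
      ((-2 * q * (q - 2) + 4 * (q - 1) * log (q - 1)) / ((q - 2) ^ 3 * (q - 1))) q := by
  have h1 : q - 1 ≠ 0 := by linarith
  have h2 : q - 2 ≠ 0 := by linarith
  have hsub (c : ℝ) : HasDerivAt (fun q : ℝ => q - c) 1 q := (hasDerivAt_id q).sub_const c
  refine ((((hsub 2).const_mul 2).fun_sub (((hsub 1).log h1).const_mul 2)).fun_div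
    ((hsub 2).fun_pow 2) (pow_ne_zero 2 h2)).congr_deriv ?_
  field_simp
  ring

/-- `β_c` is concave on `(2, ∞)`; equivalently its second derivative
`(-2q(q-2) + 4(q-1) log(q-1)) / ((q-2)³ (q-1))` is nonpositive for `q > 2`. -/
theorem betac_concave :
    ConcaveOn ℝ (Set.Ioi (2 : ℝ)) betac ∧
    ∀ q : ℝ, 2 < q →
      (-2 * q * (q - 2) + 4 * (q - 1) * Real.log (q - 1)) / ((q - 2) ^ 3 * (q - 1)) ≤ 0 := by
  have hinterior : ∀ q ∈ interior (Ioi (2 : ℝ)), 2 < q := by simp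
  refine ⟨?_, fun q hq => betac_deriv2_nonpos hq⟩
  exact concaveOn_of_hasDerivWithinAt2_nonpos (convex_Ioi 2)
    (fun q hq => (hasDerivAt_betac hq).continuousAt.continuousWithinAt)
    (fun q hq => (hasDerivAt_betac (hinterior q hq)).hasDerivWithinAt)
    (fun q hq => (hasDerivAt_betac_deriv (hinterior q hq)).hasDerivWithinAt)
    (fun q hq => betac_deriv2_nonpos (hinterior q hq))
end

section
/- For every real q > 2, one has 1/(q-1) - 1/(q-2) + 1/((q-1)·log(q-1)) > 1/(q(q-1)). -/
/-!
Put `x = q - 1 > 1` and `L = log x > 0`. Over the common denominator `q (q-1) (q-2) L`, the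
difference of the two sides has numerator `q (q-2) - 2 (q-1) L = x² - 1 - 2 x L`, which is positive
because `sinh L > L` reads `(x - x⁻¹) / 2 > log x`.
-/

open Real

theorem two_mul_log_lt_sub_inv {x : ℝ} (hx : 1 < x) : 2 * log x < x - x⁻¹ := by
  have h := self_lt_sinh_iff.2 (log_pos hx)
  rw [sinh_log (by linarith)] at h
  linarith

/-- For every real `q > 2`,
`1/(q-1) - 1/(q-2) + 1/((q-1) log(q-1)) > 1/(q(q-1))`. -/
theorem log_deriv_inequality (q : ℝ) (hq : 2 < q) :
    1 / (q - 1) - 1 / (q - 2) + 1 / ((q - 1) * Real.log (q - 1)) > 1 / (q * (q - 1)) := by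
  have hq0 : 0 < q := by linarith
  have hq1 : 0 < q - 1 := by linarith
  have hq2 : 0 < q - 2 := by linarith
  have hL : 0 < log (q - 1) := log_pos (by linarith)
  have numerator_pos : 0 < q * (q - 2) - 2 * (q - 1) * log (q - 1) := by
    have h := mul_lt_mul_of_pos_left (two_mul_log_lt_sub_inv (x := q - 1) (by linarith)) hq1
    have hx : (q - 1) * ((q - 1) - (q - 1)⁻¹) = q * (q - 2) := by field_simp; ring
    linarith
  have difference_eq : 1 / (q - 1) - 1 / (q - 2) + 1 / ((q - 1) * log (q - 1)) - 1 / (q * (q - 1))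
      = (q * (q - 2) - 2 * (q - 1) * log (q - 1)) / (q * (q - 1) * (q - 2) * log (q - 1)) := by
    field_simp
    ring
  rw [gt_iff_lt, ← sub_pos, difference_eq]
  positivity
end

section
/- Fix β ≥ 0 and q ≥ 2. The map f : [1, ∞) → [1, ∞) defined by f(b) = (e^{2β}·b + q - 1)/(e^{2β} + b + q - 2) is increasing, bounded above by e^{2β}, has b = 1 as its unique fixed point in [1,∞), and iterating f from any starting point b₀ ∈ [1, ∞) yields f^n(b₀) → 1 as n → ∞, uniformly in b₀. -/
/-!
With `a = e^{2β} ≥ 1`, the identities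
`f b - 1 = (a - 1)(b - 1) / (a + b + q - 2)` and `a - f b = (a - 1)(a + q - 1) / (a + b + q - 2)`
give the range and the bound, and the first one shows that `f` contracts the distance to `1`
by the factor `r = (a - 1)/(a + q - 1) < 1` on `[1, ∞)`. Since one step lands in `[1, a]`,
`f^[n + 1] b - 1 ≤ r ^ n (a - 1)` for every `b ≥ 1`, which is the uniform convergence.
-/

open Set Filter Topology

noncomputable section

def pathMap (a Q b : ℝ) : ℝ := (a * b + Q - 1) / (a + b + Q - 2)

namespace pathMap

variable {a Q : ℝ}

lemma denom_pos (ha : 1 ≤ a) (hQ : 1 ≤ Q) {b : ℝ} (hb : 1 ≤ b) : 0 < a + b + Q - 2 := by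
  linarith

lemma sub_one_eq (ha : 1 ≤ a) (hQ : 1 ≤ Q) {b : ℝ} (hb : 1 ≤ b) :
    pathMap a Q b - 1 = (a - 1) * (b - 1) / (a + b + Q - 2) := by
  rw [pathMap, div_sub_one (denom_pos ha hQ hb).ne']
  ring_nf

lemma one_le (ha : 1 ≤ a) (hQ : 1 ≤ Q) {b : ℝ} (hb : 1 ≤ b) : 1 ≤ pathMap a Q b := by
  have h := sub_one_eq ha hQ hb
  have : 0 ≤ (a - 1) * (b - 1) / (a + b + Q - 2) :=
    div_nonneg (mul_nonneg (by linarith) (by linarith)) (denom_pos ha hQ hb).le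
  linarith

lemma mapsTo_Ici (ha : 1 ≤ a) (hQ : 1 ≤ Q) : MapsTo (pathMap a Q) (Ici 1) (Ici 1) :=
  fun _ hb ↦ one_le ha hQ hb

lemma le_left (ha : 1 ≤ a) (hQ : 1 ≤ Q) {b : ℝ} (hb : 1 ≤ b) : pathMap a Q b ≤ a := by
  rw [pathMap, div_le_iff₀ (denom_pos ha hQ hb)]
  nlinarith [mul_nonneg (sub_nonneg.2 ha) (by linarith : (0 : ℝ) ≤ a + Q - 1)]

lemma monotoneOn (ha : 1 ≤ a) (hQ : 1 ≤ Q) : MonotoneOn (pathMap a Q) (Ici 1) := by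
  intro b hb c hc hbc
  rw [pathMap, pathMap, div_le_div_iff₀ (denom_pos ha hQ hb) (denom_pos ha hQ hc)]
  -- the cross-multiplied difference is `(c - b)(a - 1)(a + Q - 1)`
  nlinarith [mul_nonneg (sub_nonneg.2 hbc)
    (mul_nonneg (sub_nonneg.2 ha) (by linarith : (0 : ℝ) ≤ a + Q - 1))]

lemma eq_self_iff (hQ : 1 ≤ Q) {b : ℝ} (hb : 1 ≤ b) (hden : a + b + Q - 2 ≠ 0) :
    pathMap a Q b = b ↔ b = 1 := by
  rw [pathMap, div_eq_iff hden]
  constructor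
  · intro h
    have hfactor : (b - 1) * (b + Q - 1) = 0 := by linear_combination -h
    rcases mul_eq_zero.1 hfactor with h1 | h2
    · linarith
    · linarith
  · rintro rfl
    ring

def rate (a Q : ℝ) : ℝ := (a - 1) / (a + Q - 1)

lemma rate_nonneg (ha : 1 ≤ a) (hQ : 1 ≤ Q) : 0 ≤ rate a Q :=
  div_nonneg (by linarith) (by linarith)

lemma rate_lt_one (ha : 1 ≤ a) (hQ : 1 ≤ Q) : rate a Q < 1 :=
  (div_lt_one (by linarith)).2 (by linarith)

lemma sub_one_le (ha : 1 ≤ a) (hQ : 1 ≤ Q) {b : ℝ} (hb : 1 ≤ b) :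
    pathMap a Q b - 1 ≤ rate a Q * (b - 1) := by
  rw [sub_one_eq ha hQ hb, rate, div_mul_eq_mul_div]
  exact div_le_div_of_nonneg_left (mul_nonneg (by linarith) (by linarith)) (by linarith)
    (by linarith)

lemma iterate_sub_one_le (ha : 1 ≤ a) (hQ : 1 ≤ Q) (n : ℕ) {b : ℝ} (hb : 1 ≤ b) :
    (pathMap a Q)^[n] b - 1 ≤ rate a Q ^ n * (b - 1) := by
  induction n with
  | zero => simp
  | succ n ih =>
    rw [Function.iterate_succ_apply', pow_succ', mul_assoc]
    exact (sub_one_le ha hQ ((mapsTo_Ici ha hQ).iterate n hb)).trans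
      (mul_le_mul_of_nonneg_left ih (rate_nonneg ha hQ))

lemma iterate_succ_sub_one_le (ha : 1 ≤ a) (hQ : 1 ≤ Q) (n : ℕ) {b : ℝ} (hb : 1 ≤ b) :
    (pathMap a Q)^[n + 1] b - 1 ≤ rate a Q ^ n * (a - 1) := by
  rw [Function.iterate_succ_apply]
  calc _ ≤ rate a Q ^ n * (pathMap a Q b - 1) :=
        iterate_sub_one_le ha hQ n (one_le ha hQ hb)
    _ ≤ _ := by
        have := le_left ha hQ hb
        have := rate_nonneg ha hQ
        gcongr

lemma iterate_uniformly_close_one (ha : 1 ≤ a) (hQ : 1 ≤ Q) {ε : ℝ} (hε : 0 < ε) :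
    ∃ N : ℕ, ∀ n ≥ N, ∀ b ∈ Ici (1 : ℝ), |(pathMap a Q)^[n] b - 1| < ε := by
  have hlim : Tendsto (fun n : ℕ ↦ rate a Q ^ n * (a - 1)) atTop (𝓝 0) := by
    simpa using (tendsto_pow_atTop_nhds_zero_of_lt_one (rate_nonneg ha hQ)
      (rate_lt_one ha hQ)).mul_const (a - 1)
  obtain ⟨N, hN⟩ := (hlim.eventually (gt_mem_nhds hε)).exists_forall_of_atTop
  refine ⟨N + 1, fun n hn b hb ↦ ?_⟩
  obtain ⟨m, rfl⟩ : ∃ m, n = m + 1 := ⟨n - 1, by omega⟩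
  rw [abs_of_nonneg (sub_nonneg.2 ((mapsTo_Ici ha hQ).iterate _ hb))]
  exact (iterate_succ_sub_one_le ha hQ m hb).trans_lt (hN m (by omega))

end pathMap

end

/-- The one-dimensional recursion `f(b) = (e^{2β} b + q - 1)/(e^{2β} + b + q - 2)` for the
Potts model on a path in a tree is increasing on `[1, ∞)`, maps `[1, ∞)` into itself,
is bounded above by `e^{2β}`, has `b = 1` as its unique fixed point in `[1, ∞)`, and its
iterates converge to `1` uniformly in the starting point. -/
theorem path_recursion_properties (β : ℝ) (hβ : 0 ≤ β) (q : ℕ) (hq : 2 ≤ q)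
    (f : ℝ → ℝ)
    (hf : ∀ b, f b = (Real.exp (2 * β) * b + (q : ℝ) - 1)
                      / (Real.exp (2 * β) + b + (q : ℝ) - 2)) :
    MonotoneOn f (Set.Ici (1 : ℝ)) ∧
    (∀ b ∈ Set.Ici (1 : ℝ), f b ∈ Set.Ici (1 : ℝ)) ∧
    (∀ b ∈ Set.Ici (1 : ℝ), f b ≤ Real.exp (2 * β)) ∧
    (∀ b ∈ Set.Ici (1 : ℝ), (f b = b ↔ b = 1)) ∧
    (∀ ε > (0 : ℝ), ∃ N : ℕ, ∀ n ≥ N, ∀ b₀ ∈ Set.Ici (1 : ℝ), |f^[n] b₀ - 1| < ε) := by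
  obtain rfl : f = pathMap (Real.exp (2 * β)) q := funext hf
  have ha : 1 ≤ Real.exp (2 * β) := Real.one_le_exp (by linarith)
  have hQ : (1 : ℝ) ≤ q := by exact_mod_cast (by omega : 1 ≤ q)
  exact ⟨pathMap.monotoneOn ha hQ, pathMap.mapsTo_Ici ha hQ,
    fun b hb ↦ pathMap.le_left ha hQ hb,
    fun b hb ↦ pathMap.eq_self_iff hQ hb (pathMap.denom_pos ha hQ hb).ne',
    fun ε hε ↦ pathMap.iterate_uniformly_close_one ha hQ hε⟩
end

section
/- Let q > r₁ ≥ 2 be integers, β > 0 real, and b₁, b₂ > 1. Then [(b₁e^{2β} + r₁ - 1)(b₂e^{2β} + r₁ - 1) + (r₁-1)(b₁ + e^{2β} + r₁ - 2)(b₂ + e^{2β} + r₁ - 2)] / [(q - r₁)(b₁ + r₁ - 1)(b₂ + r₁ - 1)] > (e^{2β} + r₁ - 1)² / ((q - r₁)·r₁). -/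
/-!
After cancelling the common factor `q - r₁` and cross-multiplying, the difference of the two
sides is the polynomial `(r₁ - 1)(b₁ - 1)(b₂ - 1)(e^{2β} - 1)²`, which is positive since
`r₁ ≥ 2`, `b₁, b₂ > 1` and `β > 0`.
-/

theorem wired_free_cross_identity (r b₁ b₂ E : ℝ) :
    r * ((b₁ * E + r - 1) * (b₂ * E + r - 1) + (r - 1) * (b₁ + E + r - 2) * (b₂ + E + r - 2))
      - (E + r - 1) ^ 2 * ((b₁ + r - 1) * (b₂ + r - 1))
      = (r - 1) * (b₁ - 1) * (b₂ - 1) * (E - 1) ^ 2 := by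
  ring

theorem free_ratio_lt_wired_ratio {c r b₁ b₂ E : ℝ} (hc : 0 < c) (hr : 1 < r)
    (hb₁ : 1 < b₁) (hb₂ : 1 < b₂) (hE : E ≠ 1) :
    (E + r - 1) ^ 2 / (c * r)
      < ((b₁ * E + r - 1) * (b₂ * E + r - 1) + (r - 1) * (b₁ + E + r - 2) * (b₂ + E + r - 2))
        / (c * (b₁ + r - 1) * (b₂ + r - 1)) := by
  have hr₀ : 0 < r - 1 := sub_pos.2 hr
  have hb₁₀ : 0 < b₁ - 1 := sub_pos.2 hb₁
  have hb₂₀ : 0 < b₂ - 1 := sub_pos.2 hb₂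
  have hE₀ : 0 < (E - 1) ^ 2 := pow_two_pos_of_ne_zero (sub_ne_zero.2 hE)
  have hB₁ : 0 < b₁ + r - 1 := by linarith
  have hB₂ : 0 < b₂ + r - 1 := by linarith
  rw [div_lt_div_iff₀ (by positivity) (by positivity)]
  have key : 0 < c * ((r - 1) * (b₁ - 1) * (b₂ - 1) * (E - 1) ^ 2) := by positivity
  rw [← wired_free_cross_identity] at key
  linear_combination key

/-- The 'Claim' in the proof of nonquasilocality for the fuzzy Potts model on trees:
the wired conditional probability ratio strictly exceeds the free one. -/
theorem wired_ratio_gt_free_ratio (q r₁ : ℕ) (hr : 2 ≤ r₁) (hq : r₁ < q)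
    (β : ℝ) (hβ : 0 < β) (b₁ b₂ : ℝ) (hb₁ : 1 < b₁) (hb₂ : 1 < b₂) :
    ((b₁ * Real.exp (2 * β) + (r₁ : ℝ) - 1) * (b₂ * Real.exp (2 * β) + (r₁ : ℝ) - 1)
        + ((r₁ : ℝ) - 1) * (b₁ + Real.exp (2 * β) + (r₁ : ℝ) - 2)
            * (b₂ + Real.exp (2 * β) + (r₁ : ℝ) - 2))
      / (((q : ℝ) - (r₁ : ℝ)) * (b₁ + (r₁ : ℝ) - 1) * (b₂ + (r₁ : ℝ) - 1))
    > (Real.exp (2 * β) + (r₁ : ℝ) - 1) ^ 2 / (((q : ℝ) - (r₁ : ℝ)) * (r₁ : ℝ)) := by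
  have hqr : (0 : ℝ) < q - r₁ := sub_pos.2 (by exact_mod_cast hq)
  have hr₁ : (1 : ℝ) < r₁ := by exact_mod_cast hr
  have hE : Real.exp (2 * β) ≠ 1 := (Real.one_lt_exp_iff.2 (by positivity)).ne'
  exact free_ratio_lt_wired_ratio hqr hr₁ hb₁ hb₂ hE
end
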